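/- Let H be a finite simple graph that is not a base graph, with weight functions w, s : V(H) → ℕ satisfying w(v) ≤ s(v) for all v, type partition {V_1,...,V_t} and type graph H'. Define w'(x) = min_{v∈V_x}( w(v) + Σ_{u∈V_x, u≠v} s(u) ) if V_x induces a clique and w'(x) = Σ_{u∈V_x} w(u) otherwise, and s'(x) = Σ_{u∈V_x} s(u). If C' is a vertex cover of H' minimizing Σ_{x∈C'} s'(x) + Σ_{x∉C'} w'(x), then the set C ⊆ V(H) consisting of all of V_x for every x ∈ C', together with V_x \ {v_x} for every clique class x ∉ C' (where v_x is a vertex of V_x maximizing s(u) − w(u)), is a vertex cover of H minimizing Σ_{v∈C} s(v) + Σ_{v∉C} w(v); i.e., C is an optimal 2-weighted vertex cover of (H, w, s). -/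

import Mathlib

open scoped Classical

open scoped Classical

/-- Two vertices have the same type iff `N(v) \ {u} = N(u) \ {v}`. -/
def sameType {V : Type*} (G : SimpleGraph V) (u v : V) : Prop :=
  G.neighborSet v \ {u} = G.neighborSet u \ {v}

theorem sameType_equivalence {V : Type*} (G : SimpleGraph V) : Equivalence (sameType G) := by
  constructor
  · intro u; rfl
  · intro u v h; exact h.symm
  · intro u v w h1 h2
    have h1' : ∀ x : V, (G.Adj v x ∧ x ≠ u) ↔ (G.Adj u x ∧ x ≠ v) := by
      intro x
      have := Set.ext_iff.mp h1 x
      simpa [Set.mem_diff, SimpleGraph.mem_neighborSet, Set.mem_singleton_iff] using this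
    have h2' : ∀ x : V, (G.Adj w x ∧ x ≠ v) ↔ (G.Adj v x ∧ x ≠ w) := by
      intro x
      have := Set.ext_iff.mp h2 x
      simpa [Set.mem_diff, SimpleGraph.mem_neighborSet, Set.mem_singleton_iff] using this
    ext x
    simp only [Set.mem_diff, SimpleGraph.mem_neighborSet, Set.mem_singleton_iff]
    by_cases hxv : x = v
    · subst hxv
      by_cases huw : w = u
      · subst huw; tauto
      · constructor
        · rintro ⟨hadj, hxu⟩
          have h3 : G.Adj u w ∧ w ≠ x := (h1' w).mp ⟨hadj.symm, huw⟩
          have h5 : G.Adj x u ∧ u ≠ w := (h2' u).mp ⟨h3.1.symm, Ne.symm hxu⟩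
          exact ⟨h5.1.symm, hadj.ne'⟩
        · rintro ⟨hadj, hxw⟩
          have h5 : G.Adj w u ∧ u ≠ x := (h2' u).mpr ⟨hadj.symm, Ne.symm huw⟩
          have h3 : G.Adj x w ∧ w ≠ u := (h1' w).mpr ⟨h5.1.symm, Ne.symm hxw⟩
          exact ⟨h3.1.symm, Ne.symm h5.2⟩
    · constructor
      · rintro ⟨hadj, hxu⟩
        have t1 := (h2' x).mp ⟨hadj, hxv⟩
        have t2 := (h1' x).mp ⟨t1.1, hxu⟩
        exact ⟨t2.1, t1.2⟩
      · rintro ⟨hadj, hxw⟩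
        have t1 := (h1' x).mpr ⟨hadj, hxv⟩
        have t2 := (h2' x).mpr ⟨t1.1, hxw⟩
        exact ⟨t2.1, t1.2⟩

/-- The setoid of the same-type relation. -/
def typeSetoid {V : Type*} (G : SimpleGraph V) : Setoid V :=
  ⟨sameType G, sameType_equivalence G⟩

/-- The class of the type partition corresponding to a vertex of the type graph. -/
def typeClass {V : Type*} (G : SimpleGraph V) (x : Quotient (typeSetoid G)) : Set V :=
  {v | Quotient.mk (typeSetoid G) v = x}

/-- The type graph: one vertex per class of the type partition, two distinct classes
being adjacent iff every vertex of one is adjacent to every vertex of the other. -/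
def typeGraph {V : Type*} (G : SimpleGraph V) : SimpleGraph (Quotient (typeSetoid G)) where
  Adj x y := x ≠ y ∧ ∀ u v : V,
    Quotient.mk (typeSetoid G) u = x → Quotient.mk (typeSetoid G) v = y → G.Adj u v
  symm := ⟨by
    rintro x y ⟨hxy, h⟩
    exact ⟨hxy.symm, fun u v hu hv => (h v u hv hu).symm⟩⟩
  loopless := ⟨by rintro x ⟨hxx, -⟩; exact hxx rfl⟩

/-- A base graph is one whose type partition consists only of singletons. -/
def IsBaseGraph {V : Type*} (G : SimpleGraph V) : Prop :=
  ∀ u v : V, sameType G u v → u = v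

noncomputable def itpAux : (n : ℕ) → (V : Type u) → SimpleGraph V → ℕ
  | 0, V, _ => Nat.card V
  | n + 1, V, G => if IsBaseGraph G then Nat.card V else itpAux n _ (typeGraph G)

/-- The iterated type partition number: the number of vertices of the first base graph
in the sequence `H⁰ = G`, `Hⁱ = typeGraph Hⁱ⁻¹`. -/
noncomputable def itp {V : Type u} (G : SimpleGraph V) : ℕ :=
  itpAux (Nat.card V) V G

/-- The neighborhood diversity: the number of classes of the type partition. -/
noncomputable def nd {V : Type*} (G : SimpleGraph V) : ℕ :=
  Nat.card (Quotient (typeSetoid G))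

/-- A vertex cover: a set of vertices meeting every edge. -/
def IsVertexCover {V : Type*} (G : SimpleGraph V) (C : Set V) : Prop :=
  ∀ ⦃u v⦄, G.Adj u v → u ∈ C ∨ v ∈ C

/-- The cost of a candidate vertex cover `C` with respect to the weights `w ≤ s`:
`Σ_{v ∈ C} s v + Σ_{v ∉ C} w v`. -/
noncomputable def vcCost {V : Type*} (w s : V → ℕ) (C : Set V) : ℕ :=
  (∑ᶠ v ∈ C, s v) + ∑ᶠ v ∈ Cᶜ, w v


/-!
A type class containing an edge is a clique, so a vertex cover of `H` misses at most one vertex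
of a clique class; missing part of a class thus costs at least `w'` (on a clique: `w` of one
vertex and `s` of the others, minimized by dropping a maximizer of `s - w`). Distinct classes are
either completely joined or not joined at all, so the classes contained entirely in a cover `D`
of `H` form a cover of `H'` whose cost is at most that of `D`, class by class. The lift of an
optimal `C'` has exactly the cost of `C'`.
-/

section Cost

variable {α : Type*} (w s : α → ℕ)

theorem vcCost_eq_sum [Fintype α] (D : Set α) :
    vcCost w s D = ∑ v, if v ∈ D then s v else w v := by
  rw [vcCost, Finset.sum_ite, ← finsum_mem_coe_finset, ← finsum_mem_coe_finset]
  simp [Set.compl_def]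

variable {w s}

theorem sum_ite_eq_add_sum_erase {S : Finset α} {D : Set α} {v₀ : α} (hv₀ : v₀ ∈ S)
    (hv₀D : v₀ ∉ D) (hD : ∀ v ∈ S, v ≠ v₀ → v ∈ D) :
    (∑ v ∈ S, if v ∈ D then s v else w v) = w v₀ + ∑ v ∈ S.erase v₀, s v := by
  rw [← Finset.add_sum_erase S _ hv₀, if_neg hv₀D, Finset.sum_ite_of_true]
  exact fun v hv => hD v (Finset.mem_of_mem_erase hv) (Finset.ne_of_mem_erase hv)

theorem sum_le_sum_ite (hws : ∀ v, w v ≤ s v) (S : Finset α) (D : Set α) :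
    ∑ v ∈ S, w v ≤ ∑ v ∈ S, if v ∈ D then s v else w v :=
  Finset.sum_le_sum fun v _ => by split_ifs <;> simp [hws v]

theorem add_sum_erase_le_add_sum_erase (hws : ∀ v, w v ≤ s v) {S : Finset α} {v v₀ : α}
    (hv : v ∈ S) (hv₀ : v₀ ∈ S) (hmax : s v - w v ≤ s v₀ - w v₀) :
    w v₀ + ∑ u ∈ S.erase v₀, s u ≤ w v + ∑ u ∈ S.erase v, s u := by
  have := Finset.add_sum_erase S s hv
  have := Finset.add_sum_erase S s hv₀
  have := hws v
  have := hws v₀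
  omega

end Cost

section TypePartition

variable {V : Type*} {H : SimpleGraph V}

theorem sameType.adj_of_adj {u v x : V} (h : sameType H u v) (hadj : H.Adj u x) (hxv : x ≠ v) :
    H.Adj v x := by
  have hx : x ∈ H.neighborSet u \ {v} := ⟨hadj, hxv⟩
  rw [← h] at hx
  exact hx.1

theorem isClique_typeClass_of_adj {u v : V}
    (huv : Quotient.mk (typeSetoid H) u = Quotient.mk (typeSetoid H) v) (hadj : H.Adj u v) :
    H.IsClique (typeClass H (Quotient.mk (typeSetoid H) u)) := by
  have hnbr : ∀ a ∈ typeClass H (Quotient.mk (typeSetoid H) u),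
      ∃ c ∈ typeClass H (Quotient.mk (typeSetoid H) u), H.Adj a c := by
    intro a ha
    by_cases hau : a = u
    · exact ⟨v, huv.symm, hau ▸ hadj⟩
    · have hva : sameType H v a := Quotient.exact (huv.symm.trans ha.symm)
      exact ⟨u, rfl, hva.adj_of_adj hadj.symm (Ne.symm hau)⟩
  intro a ha b hb hab
  obtain ⟨c, hc, hac⟩ := hnbr a ha
  exact ((Quotient.exact (hc.trans hb.symm)).adj_of_adj hac.symm hab).symm

theorem typeGraph_adj_of_adj {u v : V} (hadj : H.Adj u v)
    (hne : Quotient.mk (typeSetoid H) u ≠ Quotient.mk (typeSetoid H) v) :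
    (typeGraph H).Adj (Quotient.mk (typeSetoid H) u) (Quotient.mk (typeSetoid H) v) := by
  refine ⟨hne, fun a b ha hb => ?_⟩
  have hav : H.Adj a v :=
    (Quotient.exact ha.symm).adj_of_adj hadj (by rintro rfl; exact hne ha.symm)
  have hab : a ≠ b := by rintro rfl; exact hne (ha.symm.trans hb)
  exact ((Quotient.exact hb.symm).adj_of_adj hav.symm hab).symm

theorem IsVertexCover.mem_of_isClique {G : SimpleGraph V} {D S : Set V} (hD : IsVertexCover G D)
    (hS : G.IsClique S) {v₀ : V} (hv₀ : v₀ ∈ S) (hv₀D : v₀ ∉ D) {v : V} (hv : v ∈ S)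
    (hne : v ≠ v₀) : v ∈ D :=
  (hD (hS hv hv₀ hne)).resolve_right hv₀D

variable (H) in
def liftCover (C' : Set (Quotient (typeSetoid H))) (f : Quotient (typeSetoid H) → V) : Set V :=
  {v | Quotient.mk (typeSetoid H) v ∈ C' ∨
    (H.IsClique (typeClass H (Quotient.mk (typeSetoid H) v)) ∧
      Quotient.mk (typeSetoid H) v ∉ C' ∧ v ≠ f (Quotient.mk (typeSetoid H) v))}

variable (H) in
def fullClasses (D : Set V) : Set (Quotient (typeSetoid H)) :=
  {x | typeClass H x ⊆ D}

theorem IsVertexCover.liftCover {C' : Set (Quotient (typeSetoid H))}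
    (hC' : IsVertexCover (typeGraph H) C') (f : Quotient (typeSetoid H) → V) :
    IsVertexCover H (liftCover H C' f) := by
  intro u v hadj
  by_cases huv : Quotient.mk (typeSetoid H) u = Quotient.mk (typeSetoid H) v
  · have hcl := isClique_typeClass_of_adj huv hadj
    by_cases hx : Quotient.mk (typeSetoid H) u ∈ C'
    · exact Or.inl (Or.inl hx)
    by_cases hu : u = f (Quotient.mk (typeSetoid H) u)
    · refine Or.inr (Or.inr ⟨huv ▸ hcl, huv ▸ hx, fun hv => hadj.ne ?_⟩)
      rw [hu, hv, huv]
    · exact Or.inl (Or.inr ⟨hcl, hx, hu⟩)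
  · exact (hC' (typeGraph_adj_of_adj hadj huv)).imp Or.inl Or.inl

theorem IsVertexCover.fullClasses {D : Set V} (hD : IsVertexCover H D) :
    IsVertexCover (typeGraph H) (fullClasses H D) := by
  rintro x y ⟨-, hxy⟩
  by_contra! h
  obtain ⟨u, hu, huD⟩ := Set.not_subset.1 h.1
  obtain ⟨v, hv, hvD⟩ := Set.not_subset.1 h.2
  exact (hD (hxy u v hu hv)).elim huD hvD

end TypePartition

section TypeWeights

variable {V : Type*} [Fintype V] {H : SimpleGraph V}

variable (H) in
noncomputable def typeClassFinset (x : Quotient (typeSetoid H)) : Finset V :=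
  Finset.univ.filter fun v => Quotient.mk (typeSetoid H) v = x

theorem coe_typeClassFinset (x : Quotient (typeSetoid H)) :
    (typeClassFinset H x : Set V) = typeClass H x := by
  ext v
  simp [typeClassFinset, typeClass]

theorem mem_typeClassFinset {x : Quotient (typeSetoid H)} {v : V} :
    v ∈ typeClassFinset H x ↔ v ∈ typeClass H x := by
  rw [← Finset.mem_coe, coe_typeClassFinset]

theorem vcCost_eq_sum_typeClassFinset (w s : V → ℕ) (D : Set V) :
    vcCost w s D = ∑ x, ∑ v ∈ typeClassFinset H x, if v ∈ D then s v else w v := by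
  rw [vcCost_eq_sum]
  exact (Finset.sum_fiberwise _ _ _).symm

variable (H) in
/-- The weight `w'` of the type graph. -/
noncomputable def typeW (w s : V → ℕ) (x : Quotient (typeSetoid H)) : ℕ :=
  if H.IsClique (typeClass H x) then
    sInf ((fun v => w v + ∑ᶠ u ∈ typeClass H x \ {v}, s u) '' typeClass H x)
  else ∑ᶠ u ∈ typeClass H x, w u

variable (H) in
/-- The weight `s'` of the type graph. -/
noncomputable def typeS (s : V → ℕ) (x : Quotient (typeSetoid H)) : ℕ :=
  ∑ᶠ u ∈ typeClass H x, s u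

variable {w s : V → ℕ}

theorem typeS_eq_sum (x : Quotient (typeSetoid H)) :
    typeS H s x = ∑ u ∈ typeClassFinset H x, s u := by
  rw [typeS, ← coe_typeClassFinset, finsum_mem_coe_finset]

theorem typeW_of_not_isClique {x : Quotient (typeSetoid H)} (hx : ¬ H.IsClique (typeClass H x)) :
    typeW H w s x = ∑ u ∈ typeClassFinset H x, w u := by
  rw [typeW, if_neg hx, ← coe_typeClassFinset, finsum_mem_coe_finset]

theorem typeW_of_isClique {x : Quotient (typeSetoid H)} (hx : H.IsClique (typeClass H x)) :
    typeW H w s x =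
      sInf ((fun v => w v + ∑ u ∈ (typeClassFinset H x).erase v, s u) '' typeClass H x) := by
  rw [typeW, if_pos hx, ← coe_typeClassFinset]
  simp only [← Finset.coe_erase, finsum_mem_coe_finset]

theorem typeW_le_of_isClique {x : Quotient (typeSetoid H)} (hx : H.IsClique (typeClass H x))
    {v : V} (hv : v ∈ typeClass H x) :
    typeW H w s x ≤ w v + ∑ u ∈ (typeClassFinset H x).erase v, s u := by
  rw [typeW_of_isClique hx]
  exact Nat.sInf_le ⟨v, hv, rfl⟩

theorem typeW_eq_of_isClique (hws : ∀ v, w v ≤ s v) {x : Quotient (typeSetoid H)}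
    (hx : H.IsClique (typeClass H x)) {v₀ : V} (hv₀ : v₀ ∈ typeClass H x)
    (hmax : ∀ u ∈ typeClass H x, s u - w u ≤ s v₀ - w v₀) :
    typeW H w s x = w v₀ + ∑ u ∈ (typeClassFinset H x).erase v₀, s u := by
  refine (typeW_le_of_isClique hx hv₀).antisymm ?_
  rw [typeW_of_isClique hx]
  refine le_csInf ⟨_, v₀, hv₀, rfl⟩ ?_
  rintro _ ⟨v, hv, rfl⟩
  exact add_sum_erase_le_add_sum_erase hws (mem_typeClassFinset.2 hv)
    (mem_typeClassFinset.2 hv₀) (hmax v hv)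

theorem sum_ite_mem_liftCover (hws : ∀ v, w v ≤ s v) (C' : Set (Quotient (typeSetoid H)))
    {f : Quotient (typeSetoid H) → V} {x : Quotient (typeSetoid H)} (hfx : f x ∈ typeClass H x)
    (hmax : ∀ u ∈ typeClass H x, s u - w u ≤ s (f x) - w (f x)) :
    (∑ v ∈ typeClassFinset H x, if v ∈ liftCover H C' f then s v else w v) =
      if x ∈ C' then typeS H s x else typeW H w s x := by
  have hmem : ∀ v ∈ typeClassFinset H x, v ∈ liftCover H C' f ↔
      x ∈ C' ∨ (H.IsClique (typeClass H x) ∧ x ∉ C' ∧ v ≠ f x) := by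
    intro v hv
    have hvx : Quotient.mk (typeSetoid H) v = x := mem_typeClassFinset.1 hv
    change Quotient.mk (typeSetoid H) v ∈ C' ∨ _ ↔ _
    rw [hvx]
  split_ifs with hx
  · rw [typeS_eq_sum]
    exact Finset.sum_ite_of_true (fun v hv => (hmem v hv).2 (Or.inl hx)) _ _
  by_cases hcl : H.IsClique (typeClass H x)
  · rw [typeW_eq_of_isClique hws hcl hfx hmax]
    have hfxF := mem_typeClassFinset.2 hfx
    refine sum_ite_eq_add_sum_erase hfxF (fun h => ?_)
      fun v hv hne => (hmem v hv).2 (Or.inr ⟨hcl, hx, hne⟩)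
    simpa [hx] using (hmem _ hfxF).1 h
  · rw [typeW_of_not_isClique hcl]
    exact Finset.sum_ite_of_false (fun v hv h => by simpa [hx, hcl] using (hmem v hv).1 h) _ _

theorem ite_mem_fullClasses_le_sum_ite (hws : ∀ v, w v ≤ s v) {D : Set V}
    (hD : IsVertexCover H D) (x : Quotient (typeSetoid H)) :
    (if x ∈ fullClasses H D then typeS H s x else typeW H w s x) ≤
      ∑ v ∈ typeClassFinset H x, if v ∈ D then s v else w v := by
  split_ifs with hx
  · rw [typeS_eq_sum, Finset.sum_ite_of_true fun v hv => hx (mem_typeClassFinset.1 hv)]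
  obtain ⟨v₀, hv₀, hv₀D⟩ := Set.not_subset.1 hx
  by_cases hcl : H.IsClique (typeClass H x)
  · rw [sum_ite_eq_add_sum_erase (mem_typeClassFinset.2 hv₀) hv₀D fun v hv hne =>
      hD.mem_of_isClique hcl hv₀ hv₀D (mem_typeClassFinset.1 hv) hne]
    exact typeW_le_of_isClique hcl hv₀
  · rw [typeW_of_not_isClique hcl]
    exact sum_le_sum_ite hws _ _

theorem vcCost_liftCover (hws : ∀ v, w v ≤ s v) (C' : Set (Quotient (typeSetoid H)))
    {f : Quotient (typeSetoid H) → V} (hf : ∀ x, Quotient.mk (typeSetoid H) (f x) = x)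
    (hmax : ∀ x, ∀ u ∈ typeClass H x, s u - w u ≤ s (f x) - w (f x)) :
    vcCost w s (liftCover H C' f) = vcCost (typeW H w s) (typeS H s) C' := by
  rw [vcCost_eq_sum_typeClassFinset, vcCost_eq_sum]
  exact Finset.sum_congr rfl fun x _ => sum_ite_mem_liftCover hws C' (hf x) (hmax x)

theorem vcCost_fullClasses_le (hws : ∀ v, w v ≤ s v) {D : Set V} (hD : IsVertexCover H D) :
    vcCost (typeW H w s) (typeS H s) (fullClasses H D) ≤ vcCost w s D := by
  rw [vcCost_eq_sum, vcCost_eq_sum_typeClassFinset (H := H)]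
  exact Finset.sum_le_sum fun x _ => ite_mem_fullClasses_le_sum_ite hws hD x

end TypeWeights

theorem wvc_recursive_step_general {V : Type} [Fintype V] (H : SimpleGraph V)
    (w s : V → ℕ)
    (hws : ∀ v, w v ≤ s v)
    (w' s' : Quotient (typeSetoid H) → ℕ)
    (hw'c : ∀ x, H.IsClique (typeClass H x) →
      w' x = sInf ((fun v => w v + ∑ᶠ u ∈ typeClass H x \ {v}, s u) '' typeClass H x))
    (hw'i : ∀ x, ¬ H.IsClique (typeClass H x) → w' x = ∑ᶠ u ∈ typeClass H x, w u)
    (hs' : ∀ x, s' x = ∑ᶠ u ∈ typeClass H x, s u)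
    (f : Quotient (typeSetoid H) → V)
    (hf1 : ∀ x, Quotient.mk (typeSetoid H) (f x) = x)
    (hf2 : ∀ x, ∀ u ∈ typeClass H x, s u - w u ≤ s (f x) - w (f x))
    (C' : Set (Quotient (typeSetoid H)))
    (hC' : IsVertexCover (typeGraph H) C' ∧
      ∀ C'' : Set (Quotient (typeSetoid H)), IsVertexCover (typeGraph H) C'' →
        vcCost w' s' C' ≤ vcCost w' s' C'')
    (C : Set V)
    (hC : C = {v | Quotient.mk (typeSetoid H) v ∈ C' ∨
      (H.IsClique (typeClass H (Quotient.mk (typeSetoid H) v)) ∧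
        Quotient.mk (typeSetoid H) v ∉ C' ∧ v ≠ f (Quotient.mk (typeSetoid H) v))}) :
    IsVertexCover H C ∧
      ∀ C2 : Set V, IsVertexCover H C2 → vcCost w s C ≤ vcCost w s C2 := by
  have hw' : w' = typeW H w s := funext fun x => by
    by_cases hx : H.IsClique (typeClass H x)
    · rw [hw'c x hx, typeW, if_pos hx]
    · rw [hw'i x hx, typeW, if_neg hx]
  obtain rfl : s' = typeS H s := funext hs'
  obtain rfl : C = liftCover H C' f := hC
  subst hw'
  obtain ⟨hC'cover, hC'min⟩ := hC'
  refine ⟨hC'cover.liftCover f, fun D hD => ?_⟩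
  calc vcCost w s (liftCover H C' f)
      = vcCost (typeW H w s) (typeS H s) C' := vcCost_liftCover hws C' hf1 hf2
    _ ≤ vcCost (typeW H w s) (typeS H s) (fullClasses H D) := hC'min _ hD.fullClasses
    _ ≤ vcCost w s D := vcCost_fullClasses_le hws hD

/-- Correctness of the recursive step of the vertex cover algorithm: lifting an optimal
2-weighted vertex cover of the type graph gives an optimal one of `H`. -/
theorem wvc_recursive_step {V : Type} [Fintype V] (H : SimpleGraph V)
    (hnb : ¬ IsBaseGraph H) (w s : V → ℕ)
    (hws : ∀ v, w v ≤ s v)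
    (w' s' : Quotient (typeSetoid H) → ℕ)
    (hw'c : ∀ x, H.IsClique (typeClass H x) →
      w' x = sInf ((fun v => w v + ∑ᶠ u ∈ typeClass H x \ {v}, s u) '' typeClass H x))
    (hw'i : ∀ x, ¬ H.IsClique (typeClass H x) → w' x = ∑ᶠ u ∈ typeClass H x, w u)
    (hs' : ∀ x, s' x = ∑ᶠ u ∈ typeClass H x, s u)
    (f : Quotient (typeSetoid H) → V)
    (hf1 : ∀ x, Quotient.mk (typeSetoid H) (f x) = x)
    (hf2 : ∀ x, ∀ u ∈ typeClass H x, s u - w u ≤ s (f x) - w (f x))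
    (C' : Set (Quotient (typeSetoid H)))
    (hC' : IsVertexCover (typeGraph H) C' ∧
      ∀ C'' : Set (Quotient (typeSetoid H)), IsVertexCover (typeGraph H) C'' →
        vcCost w' s' C' ≤ vcCost w' s' C'')
    (C : Set V)
    (hC : C = {v | Quotient.mk (typeSetoid H) v ∈ C' ∨
      (H.IsClique (typeClass H (Quotient.mk (typeSetoid H) v)) ∧
        Quotient.mk (typeSetoid H) v ∉ C' ∧ v ≠ f (Quotient.mk (typeSetoid H) v))}) :
    IsVertexCover H C ∧
      ∀ C2 : Set V, IsVertexCover H C2 → vcCost w s C ≤ vcCost w s C2 :=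
  wvc_recursive_step_general H w s hws w' s' hw'c hw'i hs' f hf1 hf2 C' hC' C hC
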